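/- arXiv:2309.00532 — 2 statements merged into one kernel-verified Lean document; each statement's English description precedes it below -/
import Mathlib

section
/- (Contraposed Löb fails in birel-IGL.) The contraposition of Löb's axiom, ◇p → ◇(p ∧ □¬p), is not valid over the class birel-IGL: there exists a birelational model B with transitive accessibility relation R and terminating composite ≤;R, and a world w of B, such that B, w ⊭ ◇p → ◇(p ∧ □¬p). Concretely, the model with worlds w₁, w₂, v₁, v₂, v₃, with w₁ R w₂, v₁ R v₂, v₂ R v₃ (transitively closed), ≤ the reflexive order generated by w₁ ≤ v₁ and w₂ ≤ v₂, and p true at all worlds, falsifies this formula at w₁. -/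
namespace IGL

/-- Modal formulas over propositional symbols indexed by naturals. -/
inductive Formula : Type
  | atom : ℕ → Formula
  | bot  : Formula
  | and  : Formula → Formula → Formula
  | or   : Formula → Formula → Formula
  | imp  : Formula → Formula → Formula
  | box  : Formula → Formula
  | dia  : Formula → Formula

/-- ¬A abbreviates A → ⊥. -/
def Formula.neg (A : Formula) : Formula := Formula.imp A Formula.bot

/-- Löb's axiom □(□A→A)→□A. -/
def lobAx (A : Formula) : Formula :=
  Formula.imp (Formula.box (Formula.imp (Formula.box A) A)) (Formula.box A)

/-- Boolean evaluation of a formula, treating modal (sub)formulas and atoms as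
propositional atoms; used to define substitution instances of classical
propositional tautologies. -/
def evalCPL (v : Formula → Bool) : Formula → Bool
  | Formula.atom n  => v (Formula.atom n)
  | Formula.bot     => false
  | Formula.and A B => evalCPL v A && evalCPL v B
  | Formula.or  A B => evalCPL v A || evalCPL v B
  | Formula.imp A B => !evalCPL v A || evalCPL v B
  | Formula.box A   => v (Formula.box A)
  | Formula.dia A   => v (Formula.dia A)

/-- A (substitution instance of a) theorem of classical propositional logic. -/
def Taut (A : Formula) : Prop := ∀ v, evalCPL v A = true

/-- The modal logic K: classical propositional logic, axiom k, modus ponens, necessitation. -/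
inductive KProof : Formula → Prop
  | taut {A : Formula} : Taut A → KProof A
  | axK (A B : Formula) :
      KProof (Formula.imp (Formula.box (Formula.imp A B))
        (Formula.imp (Formula.box A) (Formula.box B)))
  | mp {A B : Formula} : KProof (Formula.imp A B) → KProof A → KProof B
  | nec {A : Formula} : KProof A → KProof (Formula.box A)

/-- The modal logic K4: K plus axiom 4. -/
inductive K4Proof : Formula → Prop
  | taut {A : Formula} : Taut A → K4Proof A
  | axK (A B : Formula) :
      K4Proof (Formula.imp (Formula.box (Formula.imp A B))
        (Formula.imp (Formula.box A) (Formula.box B)))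
  | ax4 (A : Formula) :
      K4Proof (Formula.imp (Formula.box A) (Formula.box (Formula.box A)))
  | mp {A B : Formula} : K4Proof (Formula.imp A B) → K4Proof A → K4Proof B
  | nec {A : Formula} : K4Proof A → K4Proof (Formula.box A)

/-- Gödel–Löb logic GL: K4 plus Löb's axiom. -/
inductive GLProof : Formula → Prop
  | taut {A : Formula} : Taut A → GLProof A
  | axK (A B : Formula) :
      GLProof (Formula.imp (Formula.box (Formula.imp A B))
        (Formula.imp (Formula.box A) (Formula.box B)))
  | ax4 (A : Formula) :
      GLProof (Formula.imp (Formula.box A) (Formula.box (Formula.box A)))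
  | axLob (A : Formula) : GLProof (lobAx A)
  | mp {A B : Formula} : GLProof (Formula.imp A B) → GLProof A → GLProof B
  | nec {A : Formula} : GLProof A → GLProof (Formula.box A)

/-- Classical relational (Kripke) satisfaction. -/
def sat {W : Type} (R : W → W → Prop) (V : W → ℕ → Prop) : W → Formula → Prop
  | w, Formula.atom n  => V w n
  | _, Formula.bot     => False
  | w, Formula.and A B => sat R V w A ∧ sat R V w B
  | w, Formula.or  A B => sat R V w A ∨ sat R V w B
  | w, Formula.imp A B => sat R V w A → sat R V w B
  | w, Formula.box A   => ∀ v, R w v → sat R V v A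
  | w, Formula.dia A   => ∃ v, R w v ∧ sat R V v A

/-- A frame satisfies `A` if every model based on it satisfies `A` at every world. -/
def FrameSat (W : Type) (R : W → W → Prop) (A : Formula) : Prop :=
  ∀ (V : W → ℕ → Prop) (w : W), sat R V w A

/-- A relation is terminating if it admits no infinite path. -/
def Terminating {α : Type} (r : α → α → Prop) : Prop :=
  ¬ ∃ f : ℕ → α, ∀ n, r (f n) (f (n + 1))

/-! ### Labelled sequents -/

/-- A labelled formula `x : A`. -/
abbrev LFormula := ℕ × Formula

/-- A labelled sequent `R, Γ ⇒ Δ`: a set of relational atoms and two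
multisets of labelled formulas. -/
structure Sequent : Type where
  rel : Set (ℕ × ℕ)
  left : Multiset LFormula
  right : Multiset LFormula

/-- Variables occurring in a set of relational atoms. -/
def relVars (R : Set (ℕ × ℕ)) : Set ℕ := {z | ∃ w, (z, w) ∈ R ∨ (w, z) ∈ R}

/-- Labels occurring in a multiset of labelled formulas. -/
def mLabels (Γ : Multiset LFormula) : Set ℕ := {z | ∃ A, (z, A) ∈ Γ}

/-- The variables/labels occurring in a sequent. -/
def Sequent.vars (S : Sequent) : Set ℕ := relVars S.rel ∪ mLabels S.left ∪ mLabels S.right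

/-- `y` is a fresh label for the sequent `S`. -/
def Fresh (y : ℕ) (S : Sequent) : Prop := y ∉ S.vars

/-- A sequent has exactly one formula on the right-hand side. -/
def SingleRHS (S : Sequent) : Prop := Multiset.card S.right = 1

/-- Rule instances of the standard labelled calculi, presented as a relation
between a conclusion and its list of premisses.  The flag `tr` enables the
transitivity rule (giving ℓK4 rather than ℓK), the flag `thn` enables the
relational thinning rule `th`, and the flag `ir` imposes the restriction that
the →-right and □-right rules have exactly one formula on the RHS (giving the
multi-succedent intuitionistic system mℓIK4). -/
inductive Rule (tr thn ir : Bool) : Sequent → List Sequent → Prop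
  | id (R : Set (ℕ × ℕ)) (x p : ℕ) :
      Rule tr thn ir ⟨R, {(x, Formula.atom p)}, {(x, Formula.atom p)}⟩ []
  | cut (R : Set (ℕ × ℕ)) (Γ Γ' Δ Δ' : Multiset LFormula) (x : ℕ) (A : Formula) :
      Rule tr thn ir ⟨R, Γ + Γ', Δ + Δ'⟩
        [⟨R, Γ, (x, A) ::ₘ Δ⟩, ⟨R, (x, A) ::ₘ Γ', Δ'⟩]
  | wkL (R : Set (ℕ × ℕ)) (Γ Δ : Multiset LFormula) (x : ℕ) (A : Formula) :
      Rule tr thn ir ⟨R, (x, A) ::ₘ Γ, Δ⟩ [⟨R, Γ, Δ⟩]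
  | wkR (R : Set (ℕ × ℕ)) (Γ Δ : Multiset LFormula) (x : ℕ) (A : Formula) :
      Rule tr thn ir ⟨R, Γ, (x, A) ::ₘ Δ⟩ [⟨R, Γ, Δ⟩]
  | ctrL (R : Set (ℕ × ℕ)) (Γ Δ : Multiset LFormula) (x : ℕ) (A : Formula) :
      Rule tr thn ir ⟨R, (x, A) ::ₘ Γ, Δ⟩ [⟨R, (x, A) ::ₘ (x, A) ::ₘ Γ, Δ⟩]
  | ctrR (R : Set (ℕ × ℕ)) (Γ Δ : Multiset LFormula) (x : ℕ) (A : Formula) :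
      Rule tr thn ir ⟨R, Γ, (x, A) ::ₘ Δ⟩ [⟨R, Γ, (x, A) ::ₘ (x, A) ::ₘ Δ⟩]
  | th (R R' : Set (ℕ × ℕ)) (Γ Δ : Multiset LFormula) :
      thn = true → Rule tr thn ir ⟨R ∪ R', Γ, Δ⟩ [⟨R, Γ, Δ⟩]
  | botL (R : Set (ℕ × ℕ)) (Γ Δ : Multiset LFormula) (x : ℕ) :
      Rule tr thn ir ⟨R, (x, Formula.bot) ::ₘ Γ, Δ⟩ []
  | impL (R : Set (ℕ × ℕ)) (Γ Γ' Δ Δ' : Multiset LFormula) (x : ℕ) (A B : Formula) :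
      Rule tr thn ir ⟨R, (x, Formula.imp A B) ::ₘ (Γ + Γ'), Δ + Δ'⟩
        [⟨R, Γ, (x, A) ::ₘ Δ⟩, ⟨R, (x, B) ::ₘ Γ', Δ'⟩]
  | impR (R : Set (ℕ × ℕ)) (Γ Δ : Multiset LFormula) (x : ℕ) (A B : Formula) :
      (ir = true → Δ = 0) →
      Rule tr thn ir ⟨R, Γ, (x, Formula.imp A B) ::ₘ Δ⟩ [⟨R, (x, A) ::ₘ Γ, (x, B) ::ₘ Δ⟩]
  | andL₁ (R : Set (ℕ × ℕ)) (Γ Δ : Multiset LFormula) (x : ℕ) (A B : Formula) :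
      Rule tr thn ir ⟨R, (x, Formula.and A B) ::ₘ Γ, Δ⟩ [⟨R, (x, A) ::ₘ Γ, Δ⟩]
  | andL₂ (R : Set (ℕ × ℕ)) (Γ Δ : Multiset LFormula) (x : ℕ) (A B : Formula) :
      Rule tr thn ir ⟨R, (x, Formula.and A B) ::ₘ Γ, Δ⟩ [⟨R, (x, B) ::ₘ Γ, Δ⟩]
  | orL (R : Set (ℕ × ℕ)) (Γ Δ : Multiset LFormula) (x : ℕ) (A B : Formula) :
      Rule tr thn ir ⟨R, (x, Formula.or A B) ::ₘ Γ, Δ⟩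
        [⟨R, (x, A) ::ₘ Γ, Δ⟩, ⟨R, (x, B) ::ₘ Γ, Δ⟩]
  | orR₁ (R : Set (ℕ × ℕ)) (Γ Δ : Multiset LFormula) (x : ℕ) (A B : Formula) :
      Rule tr thn ir ⟨R, Γ, (x, Formula.or A B) ::ₘ Δ⟩ [⟨R, Γ, (x, A) ::ₘ Δ⟩]
  | orR₂ (R : Set (ℕ × ℕ)) (Γ Δ : Multiset LFormula) (x : ℕ) (A B : Formula) :
      Rule tr thn ir ⟨R, Γ, (x, Formula.or A B) ::ₘ Δ⟩ [⟨R, Γ, (x, B) ::ₘ Δ⟩]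
  | andR (R : Set (ℕ × ℕ)) (Γ Δ : Multiset LFormula) (x : ℕ) (A B : Formula) :
      Rule tr thn ir ⟨R, Γ, (x, Formula.and A B) ::ₘ Δ⟩
        [⟨R, Γ, (x, A) ::ₘ Δ⟩, ⟨R, Γ, (x, B) ::ₘ Δ⟩]
  | diaL (R : Set (ℕ × ℕ)) (Γ Δ : Multiset LFormula) (x y : ℕ) (A : Formula) :
      Fresh y ⟨R, (x, Formula.dia A) ::ₘ Γ, Δ⟩ →
      Rule tr thn ir ⟨R, (x, Formula.dia A) ::ₘ Γ, Δ⟩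
        [⟨insert (x, y) R, (y, A) ::ₘ Γ, Δ⟩]
  | diaR (R : Set (ℕ × ℕ)) (Γ Δ : Multiset LFormula) (x y : ℕ) (A : Formula) :
      (x, y) ∈ R →
      Rule tr thn ir ⟨R, Γ, (x, Formula.dia A) ::ₘ Δ⟩ [⟨R, Γ, (y, A) ::ₘ Δ⟩]
  | boxR (R : Set (ℕ × ℕ)) (Γ Δ : Multiset LFormula) (x y : ℕ) (A : Formula) :
      (ir = true → Δ = 0) →
      Fresh y ⟨R, Γ, (x, Formula.box A) ::ₘ Δ⟩ →
      Rule tr thn ir ⟨R, Γ, (x, Formula.box A) ::ₘ Δ⟩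
        [⟨insert (x, y) R, Γ, (y, A) ::ₘ Δ⟩]
  | boxL (R : Set (ℕ × ℕ)) (Γ Δ : Multiset LFormula) (x y : ℕ) (A : Formula) :
      (x, y) ∈ R →
      Rule tr thn ir ⟨R, (x, Formula.box A) ::ₘ Γ, Δ⟩ [⟨R, (y, A) ::ₘ Γ, Δ⟩]
  | trans (R : Set (ℕ × ℕ)) (Γ Δ : Multiset LFormula) (x y z : ℕ) :
      tr = true → (x, y) ∈ R → (y, z) ∈ R →
      Rule tr thn ir ⟨R, Γ, Δ⟩ [⟨insert (x, z) R, Γ, Δ⟩]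

/-- The labelled calculus ℓK. -/
def RuleLK : Sequent → List Sequent → Prop := Rule false true false

/-- The labelled calculus ℓK4 (= ℓK + transitivity rule). -/
def RuleLK4 : Sequent → List Sequent → Prop := Rule true true false

/-- ℓK4 without the thinning rule th. -/
def RuleLK4NoTh : Sequent → List Sequent → Prop := Rule true false false

/-- The multi-succedent intuitionistic calculus mℓIK4: ℓK4 where the →-right
and □-right rules must have exactly one formula on the RHS. -/
def RuleMLIK4 : Sequent → List Sequent → Prop := Rule true true true

/-- The single-succedent intuitionistic calculus ℓIK4: the restriction of ℓK4
to sequents with exactly one formula on the RHS. -/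
def RuleLIK4 : Sequent → List Sequent → Prop :=
  fun S ps => RuleLK4 S ps ∧ SingleRHS S ∧ ∀ p ∈ ps, SingleRHS p

/-- ℓIK4 without the thinning rule th. -/
def RuleLIK4NoTh : Sequent → List Sequent → Prop :=
  fun S ps => RuleLK4NoTh S ps ∧ SingleRHS S ∧ ∀ p ∈ ps, SingleRHS p

/-- Finite (wellfounded) derivability from a set of rule instances. -/
inductive Deriv (rule : Sequent → List Sequent → Prop) : Sequent → Prop
  | step (S : Sequent) (prems : List Sequent) :
      rule S prems → (∀ S' ∈ prems, Deriv rule S') → Deriv rule S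

/-! ### Non-wellfounded proofs -/

/-- A (possibly infinite) preproof of `S₀`: a tree of sequents, given as a
partial labelling of finite paths (lists of child indices), whose root is `S₀`
and in which every node is the conclusion of a rule instance whose premisses
are exactly its children. -/
structure Preproof (rule : Sequent → List Sequent → Prop) (S₀ : Sequent) : Type where
  node : List ℕ → Option Sequent
  root : node [] = some S₀
  children : ∀ p S, node p = some S →
    ∃ prems : List Sequent, rule S prems ∧ ∀ i : ℕ, node (p ++ [i]) = prems[i]?

/-- The path of length `n` along the branch determined by `f`. -/
def branchPath (f : ℕ → ℕ) (n : ℕ) : List ℕ := (List.range n).map f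

/-- An infinite sequence of sequents (a branch) has a progressing trace:
from some point on there are labels `x i` occurring in the `i`-th sequent with
either `x (i+1) = x i` or the relational atom `(x i) R (x (i+1))` occurring in
the `i`-th sequent, the latter happening infinitely often. -/
def Progressing (Sb : ℕ → Sequent) : Prop :=
  ∃ (k : ℕ) (x : ℕ → ℕ),
    (∀ i, k ≤ i → x i ∈ (Sb i).vars) ∧
    (∀ i, k ≤ i → x (i + 1) = x i ∨ (x i, x (i + 1)) ∈ (Sb i).rel) ∧
    (∀ n, ∃ i, n ≤ i ∧ k ≤ i ∧ (x i, x (i + 1)) ∈ (Sb i).rel)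

/-- `S₀` has an ∞-proof: a preproof all of whose infinite branches have a
progressing trace. -/
def InfProof (rule : Sequent → List Sequent → Prop) (S₀ : Sequent) : Prop :=
  ∃ P : Preproof rule S₀,
    ∀ (f : ℕ → ℕ) (Sb : ℕ → Sequent),
      (∀ n, P.node (branchPath f n) = some (Sb n)) → Progressing Sb

/-! ### Birelational semantics -/

/-- A birelational model on the set of worlds `W`: an intuitionistic partial
order `le`, an accessibility relation `acc` satisfying the frame conditions
(F1) and (F2), and a monotone valuation. -/
structure Birel (W : Type) : Type where
  le : W → W → Prop
  le_refl : ∀ w, le w w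
  le_trans : ∀ u v w, le u v → le v w → le u w
  le_antisymm : ∀ u v, le u v → le v u → u = v
  acc : W → W → Prop
  F1 : ∀ w w' v, le w w' → acc w v → ∃ v', le v v' ∧ acc w' v'
  F2 : ∀ w v v', acc w v → le v v' → ∃ w', le w w' ∧ acc w' v'
  val : W → ℕ → Prop
  val_mono : ∀ w w', le w w' → ∀ p, val w p → val w' p

/-- Birelational satisfaction. -/
def bsat {W : Type} (B : Birel W) : W → Formula → Prop
  | w, Formula.atom p  => B.val w p
  | _, Formula.bot     => False
  | w, Formula.and A C => bsat B w A ∧ bsat B w C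
  | w, Formula.or  A C => bsat B w A ∨ bsat B w C
  | w, Formula.imp A C => ∀ w', B.le w w' → bsat B w' A → bsat B w' C
  | w, Formula.box A   => ∀ w' v, B.le w w' → B.acc w' v → bsat B v A
  | w, Formula.dia A   => ∃ v, B.acc w v ∧ bsat B v A

/-- Membership in the class birel-IGL: the accessibility relation is
transitive and the composite ≤;R is terminating. -/
def BirelIGL {W : Type} (B : Birel W) : Prop :=
  Transitive B.acc ∧ Terminating (fun u v => ∃ m, B.le u m ∧ B.acc m v)

/-- An interpretation of a sequent into a birelational model: a map on labels
sending relational atoms of the sequent to accessibility-related worlds. -/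
def Interp {W : Type} (B : Birel W) (I : ℕ → W) (S : Sequent) : Prop :=
  ∀ x y, (x, y) ∈ S.rel → B.acc (I x) (I y)

/-- `B, I ⊨ S`. -/
def seqSat {W : Type} (B : Birel W) (I : ℕ → W) (S : Sequent) : Prop :=
  (∀ q ∈ S.left, bsat B (I q.1) q.2) → ∃ q ∈ S.right, bsat B (I q.1) q.2

/-- `B ⊨ S`: satisfaction under every interpretation. -/
def seqValid {W : Type} (B : Birel W) (S : Sequent) : Prop :=
  ∀ I : ℕ → W, Interp B I S → seqSat B I S

/-- Conjunction of a nonempty list of formulas `A ∧ B₁ ∧ ... ∧ Bₙ`. -/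
def conjList : Formula → List Formula → Formula
  | A, [] => A
  | A, B :: l => Formula.and A (conjList B l)

/-! ### (Quasi-)trees -/

/-- A set of relational atoms is a tree: there is a root from which every
other variable is reachable by a unique path of relational atoms. -/
def IsTree (R : Set (ℕ × ℕ)) : Prop :=
  ∃ x₀ ∈ relVars R, ∀ x ∈ relVars R, x ≠ x₀ →
    ∃! l : List ℕ, l ≠ [] ∧ List.Chain (fun a b => (a, b) ∈ R) x₀ l ∧
      l.getLast? = some x

/-- A quasi-tree: squeezed between a tree and its transitive closure. -/
def IsQuasiTree (R : Set (ℕ × ℕ)) : Prop :=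
  ∃ R₀ : Set (ℕ × ℕ), IsTree R₀ ∧ R₀ ⊆ R ∧
    ∀ q ∈ R, Relation.TransGen (fun a b => (a, b) ∈ R₀) q.1 q.2

/-- The (single-succedent) sequent `R, Γ ⇒ x:A` is quasi-tree-like. -/
def QuasiTreeLike (R : Set (ℕ × ℕ)) (Γ : Multiset LFormula) (x : ℕ) : Prop :=
  (R = ∅ ∧ mLabels Γ ⊆ {x}) ∨
  (IsQuasiTree R ∧ mLabels Γ ∪ {x} ⊆ relVars R)

/-! ### Kripke predicate structures -/

/-- A Kripke (predicate) structure: partially ordered worlds, growing nonempty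
domains, monotone interpretations of the unary predicates, and growing binary
relations on the domains. -/
structure Kripke (W D : Type) : Type where
  le : W → W → Prop
  le_refl : ∀ w, le w w
  le_trans : ∀ u v w, le u v → le v w → le u w
  le_antisymm : ∀ u v, le u v → le v u → u = v
  Dom : W → Set D
  Dom_ne : ∀ w, (Dom w).Nonempty
  Dom_mono : ∀ w w', le w w' → Dom w ⊆ Dom w'
  Pr : W → ℕ → Set D
  Pr_sub : ∀ w p, Pr w p ⊆ Dom w
  Pr_mono : ∀ w w' p, le w w' → Pr w p ⊆ Pr w' p
  Rel : W → D → D → Prop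
  Rel_dom : ∀ w d e, Rel w d e → d ∈ Dom w ∧ e ∈ Dom w
  Rel_mono : ∀ w w' d e, le w w' → Rel w d e → Rel w' d e

/-- Satisfaction `K, w ⊨^ρ ⟨A⟩ₓ` of the standard translation of `A`; since the
translation of `A` at `x` has only `x` free, satisfaction is presented through
the value `d = ρ x` of the environment at `x`. -/
def ksat {W D : Type} (K : Kripke W D) : W → D → Formula → Prop
  | w, d, Formula.atom p  => d ∈ K.Pr w p
  | _, _, Formula.bot     => False
  | w, d, Formula.and A B => ksat K w d A ∧ ksat K w d B
  | w, d, Formula.or  A B => ksat K w d A ∨ ksat K w d B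
  | w, d, Formula.imp A B => ∀ w', K.le w w' → ksat K w' d A → ksat K w' d B
  | w, d, Formula.box A   => ∀ w' e, K.le w w' → K.Rel w' d e → ksat K w' e A
  | w, d, Formula.dia A   => ∃ e, K.Rel w d e ∧ ksat K w e A

/-- Membership in the class pred-IGL: each `R_w` is transitive and the
composite `≤_{D_W} ; R_{D_W}` on pairs `(w, d)` with `d ∈ D_w` is terminating. -/
def PredIGL {W D : Type} (K : Kripke W D) : Prop :=
  (∀ w, Transitive (K.Rel w)) ∧
  ¬ ∃ (f : ℕ → W) (g : ℕ → D),
      ∀ n, g n ∈ K.Dom (f n) ∧ K.le (f n) (f (n + 1)) ∧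
        K.Rel (f (n + 1)) (g n) (g (n + 1))

-- The order on the counterexample model: reflexive plus w₁≤v₁, w₂≤v₂. -/
def cle (u v : Fin 5) : Prop := u = v ∨ (u = 0 ∧ v = 2) ∨ (u = 1 ∧ v = 3)

/-- Accessibility: w₁Rw₂, v₁Rv₂, v₂Rv₃, v₁Rv₃. -/
def cacc (u v : Fin 5) : Prop :=
  (u = 0 ∧ v = 1) ∨ (u = 2 ∧ v = 3) ∨ (u = 3 ∧ v = 4) ∨ (u = 2 ∧ v = 4)

instance : DecidablePred (fun q : Fin 5 × Fin 5 => cle q.1 q.2) := by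
  intro q; unfold cle; infer_instance

instance : DecidablePred (fun q : Fin 5 × Fin 5 => cacc q.1 q.2) := by
  intro q; unfold cacc; infer_instance

instance (u v : Fin 5) : Decidable (cle u v) := by unfold cle; infer_instance
instance (u v : Fin 5) : Decidable (cacc u v) := by unfold cacc; infer_instance

/-- The counterexample birelational model. -/
def cB : Birel (Fin 5) where
  le := cle
  le_refl := by decide
  le_trans := by decide
  le_antisymm := by decide
  acc := cacc
  F1 := by decide
  F2 := by decide
  val := fun _ _ => True
  val_mono := fun _ _ _ _ h => h

lemma cstep_lt (u v : Fin 5) (h : ∃ m, cB.le u m ∧ cB.acc m v) : u < v := by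
  revert h
  show (∃ m, cle u m ∧ cacc m v) → u < v
  revert u v; decide

lemma acc0 : ∀ v, cacc 0 v → v = 1 := by decide

/-- **Contraposed Löb fails in birel-IGL.** The formula ◇p → ◇(p ∧ □¬p) is not
valid over birel-IGL: some birelational model with transitive accessibility
relation and terminating composite ≤;R falsifies it at some world. -/
theorem contra_lob_fails (p : ℕ) :
    ∃ (W : Type) (B : Birel W) (w : W), Nonempty W ∧ BirelIGL B ∧
      ¬ bsat B w (Formula.imp (Formula.dia (Formula.atom p))
          (Formula.dia (Formula.and (Formula.atom p)
            (Formula.box (Formula.neg (Formula.atom p)))))) := by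
  refine ⟨Fin 5, cB, 0, ⟨0⟩, ⟨?_, ?_⟩, ?_⟩
  · intro a b c hab hbc
    revert hab hbc; show cacc a b → cacc b c → cacc a c
    revert a b c; decide
  · rintro ⟨f, hf⟩
    have hlt : ∀ n, f n < f (n + 1) := fun n => cstep_lt _ _ (hf n)
    have key : ∀ n, n ≤ (f n).val := by
      intro n; induction n with
      | zero => exact Nat.zero_le _
      | succ k ih => exact Nat.lt_of_le_of_lt ih (hlt k)
    have h5 := key 5; have := (f 5).isLt; omega
  · intro h
    have hdia : bsat cB 0 (Formula.dia (Formula.atom p)) :=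
      ⟨1, Or.inl ⟨rfl, rfl⟩, trivial⟩
    obtain ⟨v, hv, _, hbox⟩ := h 0 (Or.inl rfl) hdia
    have hv1 : v = 1 := acc0 v hv
    subst hv1
    exact hbox 3 4 (Or.inr (Or.inr ⟨rfl, rfl⟩)) (Or.inr (Or.inr (Or.inl ⟨rfl, rfl⟩)))
      4 (Or.inl rfl) trivial

end IGL
end

section
/- (Local soundness.) Let S be a quasi-tree-like labelled sequent with a single formula on the right, B a model in birel-IGL, and I an interpretation of S into B with B, I ⊭ S. Then for any inference step of ℓIK4 (other than thinning) with conclusion S, there is a premiss S' of that step and an interpretation I' of S' into B such that B, I' ⊭ S' and I'(z) ≥ I(z) for every label z of S. -/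
namespace IGL

/-! ### Auxiliary lemmas for local soundness -/

section Aux

variable {W : Type}

lemma noAccSelf (B : Birel W)
    (hterm : Terminating fun u v => ∃ m, B.le u m ∧ B.acc m v) :
    ∀ w, ¬ B.acc w w := by
  intro w hw
  exact hterm ⟨fun _ => w, fun _ => ⟨w, B.le_refl w, hw⟩⟩

/-- Monotonicity of birelational satisfaction in the intuitionistic order. -/
lemma bsat_mono (B : Birel W) : ∀ (A : Formula) (w w' : W),
    B.le w w' → bsat B w A → bsat B w' A := by
  intro A
  induction A with
  | atom p => exact fun w w' h hs => B.val_mono w w' h p hs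
  | bot => exact fun w w' _ hs => hs
  | and A C ihA ihC => exact fun w w' h hs => ⟨ihA w w' h hs.1, ihC w w' h hs.2⟩
  | or A C ihA ihC =>
      rintro w w' h (hs | hs)
      · exact Or.inl (ihA w w' h hs)
      · exact Or.inr (ihC w w' h hs)
  | imp A C ihA ihC =>
      intro w w' h hs u hu hA
      exact hs u (B.le_trans _ _ _ h hu) hA
  | box A ih =>
      intro w w' h hs u v hu hv
      exact hs u v (B.le_trans _ _ _ h hu) hv
  | dia A ih =>
      rintro w w' h ⟨v, hv, hsv⟩
      obtain ⟨v', hvv', hv'⟩ := B.F1 w w' v h hv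
      exact ⟨v', hv', ih v v' hvv' hsv⟩

/-- Chain to a snoc. -/
lemma chain_snoc {α : Type*} {Rl : α → α → Prop} :
    ∀ (l : List α) (a b : α),
      List.Chain Rl a (l ++ [b]) ↔
        List.Chain Rl a l ∧ Rl ((a :: l).getLast (by simp)) b := by
  intro l
  induction l with
  | nil => simp [List.Chain]
  | cons c l ih =>
      intro a b
      simp only [List.Chain] at ih ⊢
      simp only [List.cons_append, List.isChain_cons_cons, ih c b, List.getLast_cons_cons]
      tauto

variable [Nonempty W]

/-- Values along the ancestor chain: `upVal s` is the new value of the head of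
`s`, where `s` is a suffix of the root-to-`x₀` path and the last element of `s`
(namely `x₀`) is lifted to `w'`. -/
noncomputable def upVal (B : Birel W) (I : ℕ → W) (w' : W) : List ℕ → W
  | [] => w'
  | [_] => w'
  | u :: v :: t =>
      Classical.epsilon fun p => B.le (I u) p ∧ B.acc p (upVal B I w' (v :: t))

lemma upVal_spec (B : Birel W) (I : ℕ → W) (w' : W) :
    ∀ (s : List ℕ) (hne : s ≠ []),
      List.Chain' (fun a b => B.acc (I a) (I b)) s →
      B.le (I (s.getLast hne)) w' →
      B.le (I (s.head hne)) (upVal B I w' s) ∧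
      ∀ a t, s = a :: t → t ≠ [] → B.acc (upVal B I w' s) (upVal B I w' t) := by
  intro s
  induction s with
  | nil => intro h; exact absurd rfl h
  | cons u s ih =>
      intro hne hch hlast
      rcases s with _ | ⟨v, t⟩
      · refine ⟨by simpa [upVal] using hlast, ?_⟩
        rintro a t ⟨rfl, rfl⟩ ht
        exact absurd rfl ht
      · have hch' : List.Chain' (fun a b => B.acc (I a) (I b)) (v :: t) := hch.tail
        have hacc : B.acc (I u) (I v) := (List.isChain_cons_cons.mp hch).1
        have hlast' : B.le (I ((v :: t).getLast (by simp))) w' := by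
          simpa [List.getLast_cons_cons] using hlast
        obtain ⟨hle', _⟩ := ih (by simp) hch' hlast'
        have hex : ∃ p, B.le (I u) p ∧ B.acc p (upVal B I w' (v :: t)) := by
          obtain ⟨p, hp1, hp2⟩ := B.F2 (I u) (I v) (upVal B I w' (v :: t)) hacc hle'
          exact ⟨p, hp1, hp2⟩
        have hsp := Classical.epsilon_spec hex
        refine ⟨?_, ?_⟩
        · simpa [upVal] using hsp.1
        · rintro a t' ⟨rfl, rfl⟩ _
          simpa [upVal] using hsp.2

/-- Walking down the tree from the root along a path, assigning new values:
while the path follows the ancestor chain `ancRem`, use the precomputed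
chain values; once it leaves the chain, push values down using (F1). -/
noncomputable def walk (B : Birel W) (I : ℕ → W) (w' : W) :
    List ℕ → W → List ℕ → W
  | _, w, [] => w
  | ancRem, w, v :: l =>
      if ancRem.head? = some v then
        walk B I w' ancRem.tail (upVal B I w' ancRem) l
      else
        walk B I w' [] (Classical.epsilon fun z => B.le (I v) z ∧ B.acc w z) l

lemma walk_self (B : Birel W) (I : ℕ → W) (w' : W) :
    ∀ (s : List ℕ) (w : W), s ≠ [] → walk B I w' s w s = w' := by
  intro s
  induction s with
  | nil => intro w h; exact absurd rfl h
  | cons a t ih =>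
      intro w _
      have : walk B I w' (a :: t) w (a :: t)
          = walk B I w' t (upVal B I w' (a :: t)) t := by
        simp [walk]
      rw [this]
      rcases t with _ | ⟨b, t⟩
      · simp [walk, upVal]
      · exact ih _ (by simp)

lemma walk_spec (B : Birel W) (I : ℕ → W) (w' : W) :
    ∀ (l : List ℕ) (u₀ : ℕ) (ancRem : List ℕ) (w : W),
      B.le (I u₀) w →
      List.Chain (fun a b => B.acc (I a) (I b)) u₀ l →
      (∀ _ : ancRem ≠ [], B.acc w (upVal B I w' ancRem) ∧
        List.Chain' (fun a b => B.acc (I a) (I b)) ancRem ∧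
        ∀ hne : ancRem ≠ [], B.le (I (ancRem.getLast hne)) w') →
      B.le (I ((u₀ :: l).getLast (by simp))) (walk B I w' ancRem w l) ∧
      ∀ v, B.acc (I ((u₀ :: l).getLast (by simp))) (I v) →
        B.acc (walk B I w' ancRem w l) (walk B I w' ancRem w (l ++ [v])) ∧
        B.le (I v) (walk B I w' ancRem w (l ++ [v])) := by
  intro l
  induction l with
  | nil =>
      intro u₀ ancRem w hle _ hanc
      refine ⟨by simpa [walk] using hle, ?_⟩
      intro v hedge
      rcases ancRem with _ | ⟨a, t⟩
      · -- off chain: epsilon via F1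
        have hex : ∃ z, B.le (I v) z ∧ B.acc w z := by
          obtain ⟨z, hz1, hz2⟩ := B.F1 (I u₀) w (I v) hle hedge
          exact ⟨z, hz1, hz2⟩
        have hsp := Classical.epsilon_spec hex
        constructor
        · show B.acc (walk B I w' [] w []) (walk B I w' [] w [v])
          simpa [walk] using hsp.2
        · show B.le (I v) (walk B I w' [] w [v])
          simpa [walk] using hsp.1
      · by_cases hv : a = v
        · subst hv
          obtain ⟨hacc, hch, hlast⟩ := hanc (by simp)
          have hup := upVal_spec B I w' (a :: t) (by simp) hch (hlast _)
          constructor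
          · show B.acc (walk B I w' (a :: t) w []) (walk B I w' (a :: t) w [a])
            simpa [walk] using hacc
          · show B.le (I a) (walk B I w' (a :: t) w [a])
            simpa [walk] using hup.1
        · have hex : ∃ z, B.le (I v) z ∧ B.acc w z := by
            obtain ⟨z, hz1, hz2⟩ := B.F1 (I u₀) w (I v) hle hedge
            exact ⟨z, hz1, hz2⟩
          have hsp := Classical.epsilon_spec hex
          constructor
          · show B.acc (walk B I w' (a :: t) w []) (walk B I w' (a :: t) w [v])
            simpa [walk, hv] using hsp.2
          · show B.le (I v) (walk B I w' (a :: t) w [v])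
            simpa [walk, hv] using hsp.1
  | cons a l ih =>
      intro u₀ ancRem w hle hch hanc
      have hedge0 : B.acc (I u₀) (I a) := (List.chain_cons.mp hch).1
      have hch' : List.Chain (fun a b => B.acc (I a) (I b)) a l :=
        (List.chain_cons.mp hch).2
      have hgl : ∀ X : List ℕ, ((u₀ :: a :: X).getLast (by simp))
          = ((a :: X).getLast (by simp)) := fun X => List.getLast_cons_cons ..
      rcases ancRem with _ | ⟨b, t⟩
      · -- off chain step
        have hex : ∃ z, B.le (I a) z ∧ B.acc w z := by
          obtain ⟨z, hz1, hz2⟩ := B.F1 (I u₀) w (I a) hle hedge0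
          exact ⟨z, hz1, hz2⟩
        have hsp := Classical.epsilon_spec hex
        have key := ih a [] (Classical.epsilon fun z => B.le (I a) z ∧ B.acc w z)
          hsp.1 hch' (by intro h; exact absurd rfl h)
        have hw1 : ∀ X, walk B I w' [] w (a :: X) = walk B I w'
            [] (Classical.epsilon fun z => B.le (I a) z ∧ B.acc w z) X := by
          intro X; simp [walk]
        refine ⟨?_, ?_⟩
        · rw [hgl, hw1]; exact key.1
        · intro v hv
          rw [hgl l] at hv
          rw [hw1, List.cons_append, hw1]
          exact key.2 v hv
      · by_cases hb : b = a
        · subst hb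
          obtain ⟨hacc, hchb, hlastb⟩ := hanc (by simp)
          have hup := upVal_spec B I w' (b :: t) (by simp) hchb (hlastb _)
          have hanc' : ∀ _ : t ≠ [], B.acc (upVal B I w' (b :: t)) (upVal B I w' t) ∧
              List.Chain' (fun a b => B.acc (I a) (I b)) t ∧
              ∀ hne : t ≠ [], B.le (I (t.getLast hne)) w' := by
            intro ht
            refine ⟨hup.2 b t rfl ht, hchb.tail, ?_⟩
            intro hne
            have : (b :: t).getLast (by simp) = t.getLast hne := by
              rcases t with _ | ⟨c, t⟩
              · exact absurd rfl hne
              · exact List.getLast_cons_cons ..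
            rw [← this]; exact hlastb _
          have key := ih b t (upVal B I w' (b :: t)) hup.1 hch' hanc'
          have hw1 : ∀ X, walk B I w' (b :: t) w (b :: X)
              = walk B I w' t (upVal B I w' (b :: t)) X := by
            intro X; simp [walk]
          refine ⟨?_, ?_⟩
          · rw [hgl, hw1]; exact key.1
          · intro v hv
            rw [hgl l] at hv
            rw [hw1, List.cons_append, hw1]
            exact key.2 v hv
        · have hex : ∃ z, B.le (I a) z ∧ B.acc w z := by
            obtain ⟨z, hz1, hz2⟩ := B.F1 (I u₀) w (I a) hle hedge0
            exact ⟨z, hz1, hz2⟩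
          have hsp := Classical.epsilon_spec hex
          have key := ih a [] (Classical.epsilon fun z => B.le (I a) z ∧ B.acc w z)
            hsp.1 hch' (by intro h; exact absurd rfl h)
          have hw1 : ∀ X, walk B I w' (b :: t) w (a :: X) = walk B I w'
              [] (Classical.epsilon fun z => B.le (I a) z ∧ B.acc w z) X := by
            intro X; simp [walk, hb]
          refine ⟨?_, ?_⟩
          · rw [hgl, hw1]; exact key.1
          · intro v hv
            rw [hgl l] at hv
            rw [hw1, List.cons_append, hw1]
            exact key.2 v hv

end Aux

/-- The key lifting lemma: an interpretation of a quasi-tree of relational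
atoms into a model of birel-IGL can be lifted pointwise above any raising of
the value of a single label `x₀`. -/
lemma lift_interp {W : Type} (B : Birel W) (htrans : Transitive B.acc)
    (hterm : Terminating fun u v => ∃ m, B.le u m ∧ B.acc m v)
    (R : Set (ℕ × ℕ)) (hq : IsQuasiTree R) (x₀ : ℕ) (hx : x₀ ∈ relVars R)
    (I : ℕ → W) (hI : ∀ a b, (a, b) ∈ R → B.acc (I a) (I b))
    (w' : W) (hw : B.le (I x₀) w') :
    ∃ I' : ℕ → W, I' x₀ = w' ∧ (∀ a b, (a, b) ∈ R → B.acc (I' a) (I' b)) ∧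
      (∀ z, B.le (I z) (I' z)) ∧ ∀ z, z ∉ relVars R → I' z = I z := by
  classical
  haveI : Nonempty W := ⟨I x₀⟩
  obtain ⟨R₀, ⟨r, hr, huniq⟩, hsub, htg⟩ := hq
  have hIe : ∀ {a b : ℕ}, (a, b) ∈ R₀ → B.acc (I a) (I b) := fun h => hI _ _ (hsub h)
  have hend : ∀ a b, Relation.TransGen (fun a b => (a, b) ∈ R₀) a b →
      a ∈ relVars R₀ ∧ b ∈ relVars R₀ := by
    intro a b h
    induction h with
    | single h => exact ⟨⟨_, Or.inl h⟩, ⟨_, Or.inr h⟩⟩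
    | tail _ h ih => exact ⟨ih.1, ⟨_, Or.inr h⟩⟩
  have hsubV : relVars R₀ ⊆ relVars R := by
    rintro z ⟨v, h | h⟩
    · exact ⟨v, Or.inl (hsub h)⟩
    · exact ⟨v, Or.inr (hsub h)⟩
  have hVeq : relVars R ⊆ relVars R₀ := by
    rintro z ⟨v, h | h⟩
    · exact (hend _ _ (htg _ h)).1
    · exact (hend _ _ (htg _ h)).2
  have htga : ∀ a b, Relation.TransGen (fun a b => (a, b) ∈ R₀) a b →
      B.acc (I a) (I b) := by
    intro a b h
    induction h with
    | single h => exact hIe h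
    | tail _ h ih => exact htrans ih (hIe h)
  have hacyc : ∀ a, ¬ Relation.TransGen (fun a b => (a, b) ∈ R₀) a a := fun a h =>
    noAccSelf B hterm _ (htga _ _ h)
  have hpath : ∀ x, x ∈ relVars R₀ → x ≠ r →
      ∃ l : List ℕ, l ≠ [] ∧ List.Chain (fun a b => (a, b) ∈ R₀) r l ∧
        l.getLast? = some x := fun x hx hne => (huniq x hx hne).exists
  set path : ℕ → List ℕ := fun x =>
    if h : x ∈ relVars R₀ ∧ x ≠ r then (hpath x h.1 h.2).choose else [] with hpathdef
  have pspec : ∀ x (hx : x ∈ relVars R₀) (hne : x ≠ r),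
      path x ≠ [] ∧ List.Chain (fun a b => (a, b) ∈ R₀) r (path x) ∧
        (path x).getLast? = some x := by
    intro x hx hne
    have : path x = (hpath x hx hne).choose := by
      simp only [hpathdef]
      rw [dif_pos ⟨hx, hne⟩]
    rw [this]
    exact (hpath x hx hne).choose_spec
  have puniq : ∀ x (hx : x ∈ relVars R₀) (hne : x ≠ r) (l : List ℕ),
      (l ≠ [] ∧ List.Chain (fun a b => (a, b) ∈ R₀) r l ∧ l.getLast? = some x) →
      l = path x := by
    intro x hx hne l hl
    exact (huniq x hx hne).unique hl (pspec x hx hne)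
  have pr : path r = [] := by simp [hpathdef]
  -- no edge into the root
  have fact1 : ∀ u, (u, r) ∉ R₀ := by
    intro u hur
    by_cases hu : u = r
    · exact hacyc r (Relation.TransGen.single (hu ▸ hur))
    · have huV : u ∈ relVars R₀ := ⟨r, Or.inl hur⟩
      obtain ⟨hne, hch, hlast⟩ := pspec u huV hu
      have hlast' : (path u).getLast hne = u := by
        rw [List.getLast?_eq_getLast_of_ne_nil hne, Option.some_inj] at hlast
        exact hlast
      have hch2 : List.Chain (fun a b => (a, b) ∈ R₀) r (path u ++ r :: path u) := by
        refine List.isChain_cons_split.mpr ?_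
        refine ⟨?_, hch⟩
        change List.Chain _ r (path u ++ [r]); rw [chain_snoc]
        refine ⟨hch, ?_⟩
        have hgl : (r :: path u).getLast (by simp) = u := by
          rw [List.getLast_cons hne, hlast']
        rw [hgl]; exact hur
      have heq : path u ++ r :: path u = path u := by
        apply puniq u huV hu
        refine ⟨by simp, hch2, ?_⟩
        rw [List.getLast?_append]
        have : (r :: path u).getLast? = some u := by
          rw [List.getLast?_eq_getLast_of_ne_nil (by simp : r :: path u ≠ []),
            List.getLast_cons hne, hlast']
        rw [this]; rfl
      have := congrArg List.length heq
      simp at this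
  -- path of an edge target
  have fact2 : ∀ u v, (u, v) ∈ R₀ → path v = path u ++ [v] := by
    intro u v huv
    have hvV : v ∈ relVars R₀ := ⟨u, Or.inr huv⟩
    have hvr : v ≠ r := fun h => fact1 u (h ▸ huv)
    symm
    apply puniq v hvV hvr
    by_cases hu : u = r
    · subst hu
      rw [pr]
      exact ⟨by simp, List.Chain.cons huv List.Chain.nil, by simp⟩
    · have huV : u ∈ relVars R₀ := ⟨v, Or.inl huv⟩
      obtain ⟨hne, hch, hlast⟩ := pspec u huV hu
      refine ⟨by simp, ?_, List.getLast?_concat⟩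
      rw [chain_snoc]
      refine ⟨hch, ?_⟩
      have hlast' : (r :: path u).getLast (by simp) = u := by
        rw [List.getLast_cons hne]
        rw [List.getLast?_eq_getLast_of_ne_nil hne, Option.some_inj] at hlast
        exact hlast
      rw [hlast']; exact huv
  have hx₀V : x₀ ∈ relVars R₀ := hVeq hx
  set anc := path x₀ with hancdef
  set top := upVal B I w' (r :: anc) with htopdef
  have hchAcc : ∀ {a : ℕ} {l : List ℕ}, List.Chain (fun a b => (a, b) ∈ R₀) a l →
      List.Chain (fun a b => B.acc (I a) (I b)) a l :=
    fun h => List.Chain.imp (fun _ _ hab => hIe hab) h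
  have hancCh : List.Chain (fun a b => B.acc (I a) (I b)) r anc := by
    by_cases h0 : x₀ = r
    · have : anc = [] := by rw [hancdef, h0, pr]
      rw [this]; exact List.Chain.nil
    · exact hchAcc (pspec x₀ hx₀V h0).2.1
  have hancLast : (r :: anc).getLast (by simp) = x₀ := by
    by_cases h0 : x₀ = r
    · have : anc = [] := by rw [hancdef, h0, pr]
      rw [this] at *
      simpa using h0.symm
    · obtain ⟨hne, _, hlast⟩ := pspec x₀ hx₀V h0
      rw [List.getLast?_eq_getLast_of_ne_nil hne, Option.some_inj] at hlast
      rw [List.getLast_cons hne]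
      exact hlast
  have hancne : x₀ ≠ r → anc ≠ [] := fun h0 => (pspec x₀ hx₀V h0).1
  have hancr : anc ≠ [] → x₀ ≠ r := by
    intro h h0
    exact h (by rw [hancdef, h0, pr])
  -- chain' of r :: anc as needed by upVal_spec
  have hupTop := upVal_spec B I w' (r :: anc) (by simp) hancCh (by rw [hancLast]; exact hw)
  have hletop : B.le (I r) top := by simpa using hupTop.1
  have hancPre : ∀ _ : anc ≠ [], B.acc top (upVal B I w' anc) ∧
      List.Chain' (fun a b => B.acc (I a) (I b)) anc ∧
      ∀ hne : anc ≠ [], B.le (I (anc.getLast hne)) w' := by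
    intro hne
    refine ⟨hupTop.2 r anc rfl hne, ?_, ?_⟩
    · rcases hanc' : anc with _ | ⟨a, t⟩
      · exact List.IsChain.nil
      · rw [hanc'] at hancCh
        exact (List.chain_cons.mp hancCh).2
    · intro hne'
      have hgl : anc.getLast hne' = x₀ := by
        rw [← List.getLast_cons (a := r) hne', hancLast]
      rw [hgl]; exact hw
  have hGLu : ∀ u, u ∈ relVars R₀ → ((r :: path u).getLast (by simp)) = u := by
    intro u hu
    by_cases hur : u = r
    · subst hur; rw [pr]; simp
    · obtain ⟨hne, _, hlast⟩ := pspec u hu hur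
      rw [List.getLast?_eq_getLast_of_ne_nil hne, Option.some_inj] at hlast
      rw [List.getLast_cons hne]
      exact hlast
  have hchu : ∀ u, u ∈ relVars R₀ →
      List.Chain (fun a b => B.acc (I a) (I b)) r (path u) := by
    intro u hu
    by_cases hur : u = r
    · subst hur; rw [pr]; exact List.Chain.nil
    · exact hchAcc (pspec u hu hur).2.1
  have hWS : ∀ u, u ∈ relVars R₀ →
      B.le (I u) (walk B I w' anc top (path u)) ∧
      ∀ v, B.acc (I u) (I v) →
        B.acc (walk B I w' anc top (path u)) (walk B I w' anc top (path u ++ [v])) ∧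
        B.le (I v) (walk B I w' anc top (path u ++ [v])) := by
    intro u hu
    have hws := walk_spec B I w' (path u) r anc top hletop (hchu u hu) hancPre
    rw [hGLu u hu] at hws
    exact hws
  set I' : ℕ → W := fun x =>
    if x ∈ relVars R₀ then walk B I w' anc top (path x) else I x with hI'def
  have hI'mem : ∀ x, x ∈ relVars R₀ → I' x = walk B I w' anc top (path x) := by
    intro x hx'
    simp only [hI'def]
    rw [if_pos hx']
  have hedge : ∀ u v, (u, v) ∈ R₀ → B.acc (I' u) (I' v) := by
    intro u v huv
    have huV : u ∈ relVars R₀ := ⟨v, Or.inl huv⟩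
    have hvV : v ∈ relVars R₀ := ⟨u, Or.inr huv⟩
    rw [hI'mem u huV, hI'mem v hvV, fact2 u v huv]
    exact ((hWS u huV).2 v (hIe huv)).1
  refine ⟨I', ?_, ?_, ?_, ?_⟩
  · rw [hI'mem x₀ hx₀V]
    by_cases h0 : x₀ = r
    · have ha0 : anc = [] := by rw [hancdef, h0, pr]
      have hp0 : path x₀ = [] := by rw [h0, pr]
      rw [hp0]
      show top = w'
      rw [htopdef, ha0]
      rfl
    · rw [← hancdef]
      exact walk_self B I w' anc top (hancne h0)
  · intro a b hab
    have htgacc : ∀ c d, Relation.TransGen (fun a b => (a, b) ∈ R₀) c d →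
        B.acc (I' c) (I' d) := by
      intro c d h
      induction h with
      | single h => exact hedge _ _ h
      | tail _ h ih => exact htrans ih (hedge _ _ h)
    exact htgacc a b (htg (a, b) hab)
  · intro z
    by_cases hz : z ∈ relVars R₀
    · rw [hI'mem z hz]
      exact (hWS z hz).1
    · have : I' z = I z := by
        simp only [hI'def]
        rw [if_neg hz]
      rw [this]
      exact B.le_refl _
  · intro z hz
    have : z ∉ relVars R₀ := fun h => hz (hsubV h)
    simp only [hI'def]
    rw [if_neg this]

lemma notSeqSat_single {W : Type} (B : Birel W) (I : ℕ → W) (Rr : Set (ℕ × ℕ))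
    (Γ' : Multiset LFormula) (x : ℕ) (C : Formula)
    (h1 : ∀ q ∈ Γ', bsat B (I q.1) q.2) (h2 : ¬ bsat B (I x) C) :
    ¬ seqSat B I ⟨Rr, Γ', (x, C) ::ₘ 0⟩ := by
  intro hs
  obtain ⟨q, hq, hbq⟩ := hs h1
  rw [show ((x, C) ::ₘ 0 : Multiset LFormula) = {(x, C)} from rfl,
    Multiset.mem_singleton] at hq
  subst hq
  exact h2 hbq

/-- **Local soundness.** If a quasi-tree-like single-succedent sequent `S` is
falsified by an interpretation `I` into a birel-IGL model `B`, then any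
inference step of ℓIK4 other than thinning concluding `S` has a premiss `S'`
falsified by an interpretation `I'` with `I' z ≥ I z` for all labels `z` of `S`. -/
theorem local_soundness {W : Type} (B : Birel W) (hB : BirelIGL B)
    (R : Set (ℕ × ℕ)) (Γ : Multiset LFormula) (x₀ : ℕ) (A : Formula)
    (hqt : QuasiTreeLike R Γ x₀)
    (I : ℕ → W) (hI : Interp B I ⟨R, Γ, {(x₀, A)}⟩)
    (hns : ¬ seqSat B I ⟨R, Γ, {(x₀, A)}⟩)
    (prems : List Sequent) (hrule : RuleLIK4NoTh ⟨R, Γ, {(x₀, A)}⟩ prems) :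
    ∃ S' ∈ prems, ∃ I' : ℕ → W, Interp B I' S' ∧ ¬ seqSat B I' S' ∧
      ∀ z ∈ Sequent.vars ⟨R, Γ, {(x₀, A)}⟩, B.le (I z) (I' z) := by
  classical
  obtain ⟨htrans, hterm⟩ := hB
  obtain ⟨hrul, hS1, hprems1⟩ := hrule
  have hns' : (∀ q ∈ Γ, bsat B (I q.1) q.2) ∧
      ∀ q ∈ ({(x₀, A)} : Multiset LFormula), ¬ bsat B (I q.1) q.2 := by
    unfold seqSat at hns
    push_neg at hns
    exact hns
  obtain ⟨hL, hRt⟩ := hns'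
  have hRA : ¬ bsat B (I x₀) A := hRt (x₀, A) (Multiset.mem_singleton_self _)
  have hIR : ∀ a b, (a, b) ∈ R → B.acc (I a) (I b) := fun a b h => hI a b h
  generalize hD : ({(x₀, A)} : Multiset LFormula) = Δ₀ at hrul
  cases hrul with
  | id R' x p =>
      rw [Multiset.singleton_inj] at hD
      injection hD.symm with h1 h2
      subst h2; subst h1
      exact absurd (hL _ (Multiset.mem_singleton_self _)) hRA
  | cut R' Γ₁ Γ₂ Δ₁ Δ₂ x C =>
      have h1 := hprems1 ⟨R, Γ₁, (x, C) ::ₘ Δ₁⟩ (by simp)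
      have hΔ₁ : Δ₁ = 0 := by
        simp only [SingleRHS, Multiset.card_cons] at h1
        exact Multiset.card_eq_zero.mp (by omega)
      subst hΔ₁
      rw [zero_add] at hD
      subst hD
      by_cases hC : bsat B (I x) C
      · refine ⟨_, List.mem_cons_of_mem _ (List.mem_cons_self), I, hI, ?_,
          fun z _ => B.le_refl _⟩
        apply notSeqSat_single B I R _ x₀ A _ hRA
        intro q hq
        rw [Multiset.mem_cons] at hq
        rcases hq with rfl | hq
        · exact hC
        · exact hL q (Multiset.mem_add.mpr (Or.inr hq))
      · refine ⟨_, List.mem_cons_self, I, hI, ?_, fun z _ => B.le_refl _⟩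
        exact notSeqSat_single B I R Γ₁ x C
          (fun q hq => hL q (Multiset.mem_add.mpr (Or.inl hq))) hC
  | wkL R' Γ' Δ' x C =>
      subst hD
      refine ⟨_, List.mem_cons_self, I, hI, ?_, fun z _ => B.le_refl _⟩
      exact notSeqSat_single B I R Γ' x₀ A
        (fun q hq => hL q (Multiset.mem_cons_of_mem hq)) hRA
  | wkR R' Γ' Δ' x C =>
      have h1 := hprems1 ⟨R, Γ, Δ'⟩ (by simp)
      rw [Multiset.singleton_eq_cons_iff] at hD
      obtain ⟨_, rfl⟩ := hD
      simp [SingleRHS] at h1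
  | ctrL R' Γ' Δ' x C =>
      subst hD
      refine ⟨_, List.mem_cons_self, I, hI, ?_, fun z _ => B.le_refl _⟩
      apply notSeqSat_single B I R _ x₀ A _ hRA
      intro q hq
      rw [Multiset.mem_cons] at hq
      rcases hq with rfl | hq
      · exact hL _ (Multiset.mem_cons_self _ _)
      · exact hL q hq
  | ctrR R' Γ' Δ' x C =>
      have h1 := hprems1 ⟨R, Γ, (x, C) ::ₘ (x, C) ::ₘ Δ'⟩ (by simp)
      rw [Multiset.singleton_eq_cons_iff] at hD
      obtain ⟨_, rfl⟩ := hD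
      simp [SingleRHS] at h1
  | th R' R'' Γ' Δ' h => exact absurd h (by simp)
  | botL R' Γ' Δ' x =>
      have := hL (x, Formula.bot) (Multiset.mem_cons_self _ _)
      simp [bsat] at this
  | impL R' Γ₁ Γ₂ Δ₁ Δ₂ x C D =>
      have h1 := hprems1 ⟨R, Γ₁, (x, C) ::ₘ Δ₁⟩ (by simp)
      have hΔ₁ : Δ₁ = 0 := by
        simp only [SingleRHS, Multiset.card_cons] at h1
        exact Multiset.card_eq_zero.mp (by omega)
      subst hΔ₁
      rw [zero_add] at hD
      subst hD
      have himp : bsat B (I x) (Formula.imp C D) :=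
        hL (x, Formula.imp C D) (Multiset.mem_cons_self _ _)
      by_cases hC : bsat B (I x) C
      · have hDh : bsat B (I x) D := himp (I x) (B.le_refl _) hC
        refine ⟨_, List.mem_cons_of_mem _ (List.mem_cons_self), I, hI, ?_,
          fun z _ => B.le_refl _⟩
        apply notSeqSat_single B I R _ x₀ A _ hRA
        intro q hq
        rw [Multiset.mem_cons] at hq
        rcases hq with rfl | hq
        · exact hDh
        · exact hL q (Multiset.mem_cons_of_mem (Multiset.mem_add.mpr (Or.inr hq)))
      · refine ⟨_, List.mem_cons_self, I, hI, ?_, fun z _ => B.le_refl _⟩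
        exact notSeqSat_single B I R Γ₁ x C
          (fun q hq => hL q (Multiset.mem_cons_of_mem (Multiset.mem_add.mpr (Or.inl hq)))) hC
  | impR R' Γ' Δ' x C D hir =>
      rw [Multiset.singleton_eq_cons_iff] at hD
      obtain ⟨hpair, rfl⟩ := hD
      injection hpair with h1 h2
      subst h2; subst h1
      have hnimp : ¬ ∀ w'', B.le (I x₀) w'' → bsat B w'' C → bsat B w'' D := hRA
      push_neg at hnimp
      obtain ⟨w', hw', hwC, hwD⟩ := hnimp
      rcases hqt with ⟨rfl, hlab⟩ | ⟨hq, hsubs⟩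
      · -- R = ∅
        refine ⟨_, List.mem_cons_self, Function.update I x₀ w', ?_, ?_, ?_⟩
        · intro a b hab; exact absurd hab (by simp)
        · apply notSeqSat_single B (Function.update I x₀ w') ∅ _ x₀ D ?_
            (by rwa [Function.update_self])
          intro q hq
          rw [Multiset.mem_cons] at hq
          rcases hq with rfl | hq
          · rw [Function.update_self]; exact hwC
          · have hq1 : q.1 = x₀ := hlab ⟨q.2, hq⟩
            rw [hq1, Function.update_self]
            exact bsat_mono B q.2 _ _ hw' (hq1 ▸ hL q hq)
        · intro z _
          by_cases hz : z = x₀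
          · subst hz; rw [Function.update_self]; exact hw'
          · rw [Function.update_of_ne hz]; exact B.le_refl _
      · -- quasi-tree
        have hx₀R : x₀ ∈ relVars R := hsubs (Or.inr rfl)
        obtain ⟨I', hIx₀, hedges, hle, _⟩ :=
          lift_interp B htrans hterm R hq x₀ hx₀R I hIR w' hw'
        refine ⟨_, List.mem_cons_self, I', (fun a b hab => hedges a b hab), ?_, fun z _ => hle z⟩
        apply notSeqSat_single B I' R _ x₀ D ?_ (by rwa [hIx₀])
        intro q hq
        rw [Multiset.mem_cons] at hq
        rcases hq with rfl | hq
        · rw [hIx₀]; exact hwC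
        · exact bsat_mono B q.2 _ _ (hle q.1) (hL q hq)
  | andL₁ R' Γ' Δ' x C D =>
      subst hD
      refine ⟨_, List.mem_cons_self, I, hI, ?_, fun z _ => B.le_refl _⟩
      apply notSeqSat_single B I R _ x₀ A _ hRA
      intro q hq
      rw [Multiset.mem_cons] at hq
      rcases hq with rfl | hq
      · exact (hL (x, Formula.and C D) (Multiset.mem_cons_self _ _)).1
      · exact hL q (Multiset.mem_cons_of_mem hq)
  | andL₂ R' Γ' Δ' x C D =>
      subst hD
      refine ⟨_, List.mem_cons_self, I, hI, ?_, fun z _ => B.le_refl _⟩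
      apply notSeqSat_single B I R _ x₀ A _ hRA
      intro q hq
      rw [Multiset.mem_cons] at hq
      rcases hq with rfl | hq
      · exact (hL (x, Formula.and C D) (Multiset.mem_cons_self _ _)).2
      · exact hL q (Multiset.mem_cons_of_mem hq)
  | orL R' Γ' Δ' x C D =>
      subst hD
      have hor : bsat B (I x) (Formula.or C D) :=
        hL (x, Formula.or C D) (Multiset.mem_cons_self _ _)
      rcases hor with hC | hDh
      · refine ⟨_, List.mem_cons_self, I, hI, ?_, fun z _ => B.le_refl _⟩
        apply notSeqSat_single B I R _ x₀ A _ hRA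
        intro q hq
        rw [Multiset.mem_cons] at hq
        rcases hq with rfl | hq
        · exact hC
        · exact hL q (Multiset.mem_cons_of_mem hq)
      · refine ⟨_, List.mem_cons_of_mem _ (List.mem_cons_self), I, hI, ?_,
          fun z _ => B.le_refl _⟩
        apply notSeqSat_single B I R _ x₀ A _ hRA
        intro q hq
        rw [Multiset.mem_cons] at hq
        rcases hq with rfl | hq
        · exact hDh
        · exact hL q (Multiset.mem_cons_of_mem hq)
  | orR₁ R' Γ' Δ' x C D =>
      rw [Multiset.singleton_eq_cons_iff] at hD
      obtain ⟨hpair, rfl⟩ := hD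
      injection hpair with h1 h2
      subst h2; subst h1
      have hnor : ¬ (bsat B (I x₀) C ∨ bsat B (I x₀) D) := hRA
      push_neg at hnor
      refine ⟨_, List.mem_cons_self, I, hI, ?_, fun z _ => B.le_refl _⟩
      exact notSeqSat_single B I R Γ x₀ C hL hnor.1
  | orR₂ R' Γ' Δ' x C D =>
      rw [Multiset.singleton_eq_cons_iff] at hD
      obtain ⟨hpair, rfl⟩ := hD
      injection hpair with h1 h2
      subst h2; subst h1
      have hnor : ¬ (bsat B (I x₀) C ∨ bsat B (I x₀) D) := hRA
      push_neg at hnor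
      refine ⟨_, List.mem_cons_self, I, hI, ?_, fun z _ => B.le_refl _⟩
      exact notSeqSat_single B I R Γ x₀ D hL hnor.2
  | andR R' Γ' Δ' x C D =>
      rw [Multiset.singleton_eq_cons_iff] at hD
      obtain ⟨hpair, rfl⟩ := hD
      injection hpair with h1 h2
      subst h2; subst h1
      have hnand : ¬ (bsat B (I x₀) C ∧ bsat B (I x₀) D) := hRA
      by_cases hC : bsat B (I x₀) C
      · refine ⟨_, List.mem_cons_of_mem _ (List.mem_cons_self), I, hI, ?_,
          fun z _ => B.le_refl _⟩
        exact notSeqSat_single B I R Γ x₀ D hL (fun hDh => hnand ⟨hC, hDh⟩)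
      · refine ⟨_, List.mem_cons_self, I, hI, ?_, fun z _ => B.le_refl _⟩
        exact notSeqSat_single B I R Γ x₀ C hL hC
  | diaL R' Γ' Δ' x y C hf =>
      subst hD
      have hdia : bsat B (I x) (Formula.dia C) :=
        hL (x, Formula.dia C) (Multiset.mem_cons_self _ _)
      obtain ⟨v, hv, hvC⟩ := hdia
      have hyR : y ∉ relVars R := fun h => hf (Or.inl (Or.inl h))
      have hyΓ : ∀ q ∈ ((x, Formula.dia C) ::ₘ Γ' : Multiset LFormula), q.1 ≠ y := by
        rintro q hq rfl
        exact hf (Or.inl (Or.inr ⟨q.2, hq⟩))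
      have hyx₀ : x₀ ≠ y := by
        rintro rfl
        exact hf (Or.inr ⟨A, Multiset.mem_singleton_self _⟩)
      refine ⟨_, List.mem_cons_self, Function.update I y v, ?_, ?_, ?_⟩
      · intro a b hab
        rcases Set.mem_insert_iff.mp hab with hab | hab
        · simp only [Prod.mk.injEq] at hab
          rw [hab.1, hab.2]
          rw [Function.update_self,
            Function.update_of_ne (hyΓ (x, Formula.dia C) (Multiset.mem_cons_self _ _))]
          exact hv
        · have ha : a ≠ y := fun h => hyR (h ▸ ⟨b, Or.inl hab⟩)
          have hb : b ≠ y := fun h => hyR (h ▸ ⟨a, Or.inr hab⟩)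
          rw [Function.update_of_ne ha, Function.update_of_ne hb]
          exact hIR a b hab
      · apply notSeqSat_single B _ _ _ x₀ A ?_ ?_
        · intro q hq
          rw [Multiset.mem_cons] at hq
          rcases hq with rfl | hq
          · rw [Function.update_self]; exact hvC
          · rw [Function.update_of_ne (hyΓ q (Multiset.mem_cons_of_mem hq))]
            exact hL q (Multiset.mem_cons_of_mem hq)
        · rw [Function.update_of_ne hyx₀]; exact hRA
      · intro z hz
        have hzy : z ≠ y := fun h => hf (h ▸ hz)
        rw [Function.update_of_ne hzy]
        exact B.le_refl _
  | diaR R' Γ' Δ' x y C hxy =>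
      rw [Multiset.singleton_eq_cons_iff] at hD
      obtain ⟨hpair, rfl⟩ := hD
      injection hpair with h1 h2
      subst h2; subst h1
      have hndia : ¬ ∃ v, B.acc (I x₀) v ∧ bsat B v C := hRA
      push_neg at hndia
      refine ⟨_, List.mem_cons_self, I, hI, ?_, fun z _ => B.le_refl _⟩
      exact notSeqSat_single B I R Γ y C hL (hndia (I y) (hIR x₀ y hxy))
  | boxR R' Γ' Δ' x y C hir hf =>
      rw [Multiset.singleton_eq_cons_iff] at hD
      obtain ⟨hpair, rfl⟩ := hD
      injection hpair with h1 h2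
      subst h2; subst h1
      have hnbox : ¬ ∀ w'' v, B.le (I x₀) w'' → B.acc w'' v → bsat B v C := hRA
      push_neg at hnbox
      obtain ⟨w', v, hw', hv, hvC⟩ := hnbox
      have hyR : y ∉ relVars R := fun h => hf (Or.inl (Or.inl h))
      have hyΓ : ∀ q ∈ Γ, q.1 ≠ y := by
        rintro q hq rfl
        exact hf (Or.inl (Or.inr ⟨q.2, hq⟩))
      have hyx₀ : x₀ ≠ y := by
        rintro rfl
        exact hf (Or.inr ⟨Formula.box C, by simp [mLabels]⟩)
      rcases hqt with ⟨rfl, hlab⟩ | ⟨hq, hsubs⟩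
      · -- R = ∅
        set I' := Function.update (Function.update I x₀ w') y v with hI'def
        have hI'x₀ : I' x₀ = w' := by
          rw [hI'def, Function.update_of_ne hyx₀, Function.update_self]
        refine ⟨_, List.mem_cons_self, I', ?_, ?_, ?_⟩
        · intro a b hab
          rcases Set.mem_insert_iff.mp hab with hab | hab
          · simp only [Prod.mk.injEq] at hab
            rw [hab.1, hab.2]
            rw [hI'x₀]
            rw [hI'def, Function.update_self]
            exact hv
          · exact absurd hab (by simp)
        · apply notSeqSat_single B I' ∅ Γ y C ?_
            (by rw [hI'def, Function.update_self]; exact hvC)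
          intro q hq
          have hq1 : q.1 = x₀ := hlab ⟨q.2, hq⟩
          rw [hq1, hI'x₀]
          exact bsat_mono B q.2 _ _ hw' (hq1 ▸ hL q hq)
        · intro z hz
          have hzy : z ≠ y := fun h => hf (h ▸ hz)
          rw [hI'def, Function.update_of_ne hzy]
          by_cases hzx : z = x₀
          · subst hzx; rw [Function.update_self]; exact hw'
          · rw [Function.update_of_ne hzx]; exact B.le_refl _
      · -- quasi-tree
        have hx₀R : x₀ ∈ relVars R := hsubs (Or.inr rfl)
        obtain ⟨I'', hIx₀, hedges, hle, _⟩ :=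
          lift_interp B htrans hterm R hq x₀ hx₀R I hIR w' hw'
        set I' := Function.update I'' y v with hI'def
        have hI'x₀ : I' x₀ = w' := by
          rw [hI'def, Function.update_of_ne hyx₀, hIx₀]
        refine ⟨_, List.mem_cons_self, I', ?_, ?_, ?_⟩
        · intro a b hab
          rcases Set.mem_insert_iff.mp hab with hab | hab
          · simp only [Prod.mk.injEq] at hab
            rw [hab.1, hab.2]
            rw [hI'x₀, hI'def, Function.update_self]
            exact hv
          · have ha : a ≠ y := fun h => hyR (h ▸ ⟨b, Or.inl hab⟩)
            have hb : b ≠ y := fun h => hyR (h ▸ ⟨a, Or.inr hab⟩)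
            rw [hI'def, Function.update_of_ne ha, Function.update_of_ne hb]
            exact hedges a b hab
        · apply notSeqSat_single B I' R Γ y C ?_
            (by rw [hI'def, Function.update_self]; exact hvC)
          intro q hq
          rw [hI'def, Function.update_of_ne (hyΓ q hq)]
          exact bsat_mono B q.2 _ _ (hle q.1) (hL q hq)
        · intro z hz
          have hzy : z ≠ y := fun h => hf (h ▸ hz)
          rw [hI'def, Function.update_of_ne hzy]
          exact hle z
  | boxL R' Γ' Δ' x y C hxy =>
      subst hD
      have hbox : bsat B (I x) (Formula.box C) :=
        hL (x, Formula.box C) (Multiset.mem_cons_self _ _)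
      refine ⟨_, List.mem_cons_self, I, hI, ?_, fun z _ => B.le_refl _⟩
      apply notSeqSat_single B I R _ x₀ A _ hRA
      intro q hq
      rw [Multiset.mem_cons] at hq
      rcases hq with rfl | hq
      · exact hbox (I x) (I y) (B.le_refl _) (hIR x y hxy)
      · exact hL q (Multiset.mem_cons_of_mem hq)
  | trans R' Γ' Δ' x y z htr hxy hyz =>
      subst hD
      refine ⟨_, List.mem_cons_self, I, ?_, hns, fun z _ => B.le_refl _⟩
      intro a b hab
      rcases Set.mem_insert_iff.mp hab with hab | hab
      · simp only [Prod.mk.injEq] at hab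
        rw [hab.1, hab.2]
        exact htrans (hIR x y hxy) (hIR y z hyz)
      · exact hIR a b hab


end IGL
end
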